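/- Let H be a (possibly infinite) hypergraph, m, b ≥ 1 integers, λ = (b+1)^{−1/m}, and σ₀ an initial game configuration on H with total danger w_λ(σ₀) = Σ_{S∈E(H), S∩B_{σ₀}=∅} λ^{|S∩U_{σ₀}|} < 1/(b+1). Then Breaker has a strategy for the (m,b) Maker-Breaker game on H starting from σ₀ (Maker claims m unclaimed vertices per turn, then Breaker claims b) which guarantees that Maker never fully claims a hyperedge S ∈ E(H). In particular, if H is finite, Breaker wins the game. -/

import Mathlib

open scoped Classical

inductive Mark : Type
  | U | M | B
deriving DecidableEq

noncomputable def wS {V : Type*} (lam : ℝ) (σ : V → Mark) (S : Finset V) : ℝ :=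
  if ∀ v ∈ S, σ v ≠ Mark.B then lam ^ (S.filter fun v => σ v = Mark.U).card else 0

noncomputable def totalW {V : Type*} (lam : ℝ) (E : Set (Finset V)) (σ : V → Mark) : ℝ :=
  ∑' S : E, wS lam σ S.1

/-- Claim every element of `A` for the player `c`, leaving other elements unchanged. -/
noncomputable def claimSet {V : Type*} (σ : V → Mark) (A : Finset V) (c : Mark) : V → Mark :=
  fun v => if v ∈ A then c else σ v

/-- A strategy for Breaker in a game where he claims at most `b` unclaimed elements per
turn: as a function of the current configuration it produces his set of claims. -/
structure BStrategy (V : Type*) (b : ℕ) where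
  move : (V → Mark) → Finset V
  sub : ∀ σ : V → Mark, ↑(move σ) ⊆ {v | σ v = Mark.U}
  card_le : ∀ σ : V → Mark, (move σ).card ≤ b

/-- `σ, A` is a play of the Maker-Breaker game starting from `σ0` in which Breaker
follows the strategy `str` and Maker claims at most `mk k` unclaimed elements on turn
`k`: `σ k` is the configuration at the start of round `k`, `A k` is the set claimed by
Maker in round `k`, after which Breaker claims the set given by his strategy. -/
def IsPlay {V : Type*} (mk : ℕ → ℕ) (b : ℕ) (str : BStrategy V b) (σ0 : V → Mark)
    (σ : ℕ → V → Mark) (A : ℕ → Finset V) : Prop :=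
  σ 0 = σ0 ∧
  (∀ k, ↑(A k) ⊆ {v | σ k v = Mark.U}) ∧
  (∀ k, (A k).card ≤ mk k) ∧
  (∀ k, σ (k + 1) =
    claimSet (claimSet (σ k) (A k) Mark.M)
      (str.move (claimSet (σ k) (A k) Mark.M)) Mark.B)


/-! Beck's potential argument. The danger of a vertex is the total danger of the hyperedges
through it. A Maker claim of an unclaimed vertex `x` multiplies the danger of each hyperedge
through `x` by `λ⁻¹`, and the danger of any vertex by at most that factor; so if every
unclaimed vertex has danger at most `D`, Maker's `m` claims raise the total danger by at most
`(λ⁻¹ - 1)(1 + λ⁻¹ + ⋯ + λ⁻⁽ᵐ⁻¹⁾) D = (λ⁻ᵐ - 1) D = b D`. Breaker claims, one at a time, a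
vertex of almost maximal danger: each claim removes that vertex's danger from the total, and
Breaker's claims never increase any danger, so after his move `total + b · maxDanger` is at
most the total he faced, up to an arbitrarily small slack. Hence `total + b · maxDanger < 1`
after each Breaker move, the total stays below `1` after each Maker move, and a hyperedge
claimed entirely by Maker would alone have danger `λ⁰ = 1`. -/

namespace Beck

variable {V : Type*} {lam : ℝ} {E : Set (Finset V)} {σ : V → Mark}

def DangerSummable (lam : ℝ) (E : Set (Finset V)) (σ : V → Mark) : Prop :=
  Summable fun S : E => wS lam σ S.1

noncomputable def vertexDanger (lam : ℝ) (E : Set (Finset V)) (σ : V → Mark) (x : V) : ℝ :=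
  ∑' S : E, if x ∈ S.1 then wS lam σ S.1 else 0

/-- When no vertex is unclaimed, the junk value `sSup ∅ = 0` is the right one. -/
noncomputable def maxDanger (lam : ℝ) (E : Set (Finset V)) (σ : V → Mark) : ℝ :=
  sSup (vertexDanger lam E σ '' {v | σ v = Mark.U})

def BreakerSafe (lam : ℝ) (E : Set (Finset V)) (b : ℕ) (σ : V → Mark) : Prop :=
  DangerSummable lam E σ ∧ totalW lam E σ + b * maxDanger lam E σ < 1

lemma claimSet_empty (σ : V → Mark) (c : Mark) : claimSet σ ∅ c = σ := by
  funext v; simp [claimSet]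

lemma claimSet_insert (σ : V → Mark) (x : V) (A : Finset V) (c : Mark) :
    claimSet σ (insert x A) c = claimSet (claimSet σ {x} c) A c := by
  funext v
  by_cases h : v ∈ A <;> by_cases h' : v = x <;> simp [claimSet, h, h']

lemma claimSet_eq_U_iff {A : Finset V} {c : Mark} (hc : c ≠ Mark.U) {v : V} :
    claimSet σ A c v = Mark.U ↔ v ∉ A ∧ σ v = Mark.U := by
  unfold claimSet
  split_ifs with h <;> simp [h, hc]

lemma subset_unclaimed_claimSet_singleton {x : V} {A : Finset V} {c : Mark} (hc : c ≠ Mark.U)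
    (hA : ↑(insert x A) ⊆ {v | σ v = Mark.U}) (hxA : x ∉ A) :
    ↑A ⊆ {v | claimSet σ {x} c v = Mark.U} := fun v hv =>
  (claimSet_eq_U_iff hc).2
    ⟨by rintro h; rw [Finset.mem_singleton.1 h] at hv; exact hxA hv,
      hA (Finset.mem_insert_of_mem hv)⟩

lemma wS_nonneg (hl : 0 ≤ lam) (σ : V → Mark) (S : Finset V) : 0 ≤ wS lam σ S := by
  unfold wS
  split_ifs <;> positivity

lemma wS_claimSet_of_disjoint {A S : Finset V} (h : Disjoint A S) (c : Mark) :
    wS lam (claimSet σ A c) S = wS lam σ S := by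
  have hS : ∀ v ∈ S, claimSet σ A c v = σ v := fun v hv =>
    if_neg (Finset.disjoint_right.1 h hv)
  unfold wS
  rw [Finset.filter_congr fun v hv => by rw [hS v hv]]
  exact if_congr (forall₂_congr fun v hv => by rw [hS v hv]) rfl rfl

lemma wS_claimSet_singleton_M (hl : lam ≠ 0) {x : V} (hx : σ x = Mark.U) (S : Finset V) :
    wS lam (claimSet σ {x} Mark.M) S
      = wS lam σ S + (lam⁻¹ - 1) * (if x ∈ S then wS lam σ S else 0) := by
  split_ifs with hxS
  swap
  · rw [wS_claimSet_of_disjoint (Finset.disjoint_singleton_left.2 hxS)]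
    ring
  have hB : (∀ v ∈ S, claimSet σ {x} Mark.M v ≠ Mark.B) ↔ ∀ v ∈ S, σ v ≠ Mark.B :=
    forall₂_congr fun v _ => by by_cases hv : v = x <;> simp [claimSet, hv, hx]
  have hU : S.filter (fun v => σ v = Mark.U)
      = insert x (S.filter fun v => claimSet σ {x} Mark.M v = Mark.U) := by
    ext v
    by_cases hv : v = x <;> simp [claimSet, hv, hx, hxS]
  have hxU : x ∉ S.filter fun v => claimSet σ {x} Mark.M v = Mark.U := by simp [claimSet]
  unfold wS
  rw [hU, Finset.card_insert_of_notMem hxU]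
  by_cases hSB : ∀ v ∈ S, σ v ≠ Mark.B
  · rw [if_pos (hB.2 hSB), if_pos hSB]
    field_simp
    ring
  · rw [if_neg (mt hB.1 hSB), if_neg hSB]
    ring

lemma wS_claimSet_singleton_B (x : V) (S : Finset V) :
    wS lam (claimSet σ {x} Mark.B) S = wS lam σ S - (if x ∈ S then wS lam σ S else 0) := by
  split_ifs with hxS
  · have : wS lam (claimSet σ {x} Mark.B) S = 0 :=
      if_neg fun h => h x hxS (by simp [claimSet])
    rw [this, sub_self]
  · rw [wS_claimSet_of_disjoint (Finset.disjoint_singleton_left.2 hxS), sub_zero]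

lemma wS_claimSet_B_le (hl : 0 ≤ lam) (σ : V → Mark) (A S : Finset V) :
    wS lam (claimSet σ A Mark.B) S ≤ wS lam σ S := by
  by_cases h : Disjoint A S
  · exact (wS_claimSet_of_disjoint h _).le
  · obtain ⟨v, hvA, hvS⟩ := Finset.not_disjoint_iff.1 h
    have : wS lam (claimSet σ A Mark.B) S = 0 :=
      if_neg fun h => h v hvS (by simp [claimSet, hvA])
    exact this ▸ wS_nonneg hl σ S

lemma wS_eq_one_of_forall_M {S : Finset V} (hS : ∀ v ∈ S, σ v = Mark.M) : wS lam σ S = 1 := by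
  have hfilter : S.filter (fun v => σ v = Mark.U) = ∅ :=
    Finset.filter_eq_empty_iff.2 fun v hv => by simp [hS v hv]
  unfold wS
  rw [if_pos fun v hv => by simp [hS v hv], hfilter, Finset.card_empty, pow_zero]

lemma ite_mem_wS_nonneg (hl : 0 ≤ lam) (σ : V → Mark) (x : V) (S : Finset V) :
    0 ≤ if x ∈ S then wS lam σ S else 0 := by
  split_ifs
  exacts [wS_nonneg hl σ S, le_rfl]

lemma ite_mem_wS_le (hl : 0 ≤ lam) (σ : V → Mark) (x : V) (S : Finset V) :
    (if x ∈ S then wS lam σ S else 0) ≤ wS lam σ S := by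
  split_ifs
  exacts [le_rfl, wS_nonneg hl σ S]

lemma DangerSummable.summable_ite_mem (hl : 0 ≤ lam) (hσ : DangerSummable lam E σ) (x : V) :
    Summable fun S : E => if x ∈ S.1 then wS lam σ S.1 else 0 :=
  hσ.of_nonneg_of_le (fun S => ite_mem_wS_nonneg hl σ x S.1) fun S => ite_mem_wS_le hl σ x S.1

lemma totalW_nonneg (hl : 0 ≤ lam) (E : Set (Finset V)) (σ : V → Mark) :
    0 ≤ totalW lam E σ :=
  tsum_nonneg fun S => wS_nonneg hl σ S.1

lemma vertexDanger_nonneg (hl : 0 ≤ lam) (E : Set (Finset V)) (σ : V → Mark) (x : V) :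
    0 ≤ vertexDanger lam E σ x :=
  tsum_nonneg fun S => ite_mem_wS_nonneg hl σ x S.1

lemma vertexDanger_le_totalW (hl : 0 ≤ lam) (hσ : DangerSummable lam E σ) (x : V) :
    vertexDanger lam E σ x ≤ totalW lam E σ :=
  (hσ.summable_ite_mem hl x).tsum_le_tsum (fun S => ite_mem_wS_le hl σ x S.1) hσ

lemma maxDanger_nonneg (hl : 0 ≤ lam) (E : Set (Finset V)) (σ : V → Mark) :
    0 ≤ maxDanger lam E σ :=
  Real.sSup_nonneg <| by rintro _ ⟨v, -, rfl⟩; exact vertexDanger_nonneg hl E σ v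

lemma maxDanger_le_totalW (hl : 0 ≤ lam) (hσ : DangerSummable lam E σ) :
    maxDanger lam E σ ≤ totalW lam E σ :=
  Real.sSup_le (by rintro _ ⟨v, -, rfl⟩; exact vertexDanger_le_totalW hl hσ v)
    (totalW_nonneg hl E σ)

lemma vertexDanger_le_maxDanger (hl : 0 ≤ lam) (hσ : DangerSummable lam E σ) {v : V}
    (hv : σ v = Mark.U) : vertexDanger lam E σ v ≤ maxDanger lam E σ :=
  le_csSup ⟨totalW lam E σ, by rintro _ ⟨u, -, rfl⟩; exact vertexDanger_le_totalW hl hσ u⟩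
    ⟨v, hv, rfl⟩

lemma exists_maxDanger_sub_lt (hne : ∃ v, σ v = Mark.U) {ε : ℝ} (hε : 0 < ε) :
    ∃ v, σ v = Mark.U ∧ maxDanger lam E σ - ε < vertexDanger lam E σ v := by
  obtain ⟨v₀, hv₀⟩ := hne
  have hlt : maxDanger lam E σ - ε < maxDanger lam E σ := sub_lt_self _ hε
  obtain ⟨_, ⟨v, hv, rfl⟩, hlt⟩ := exists_lt_of_lt_csSup (Set.Nonempty.image _ ⟨v₀, hv₀⟩) hlt
  exact ⟨v, hv, hlt⟩

lemma BreakerSafe.of_totalW_lt (hl : 0 ≤ lam) {b : ℕ} (hσ : DangerSummable lam E σ)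
    (h : totalW lam E σ < 1 / ((b : ℝ) + 1)) : BreakerSafe lam E b σ := by
  refine ⟨hσ, ?_⟩
  have hb : (0 : ℝ) < b + 1 := by positivity
  have := mul_lt_mul_of_pos_left h hb
  rw [mul_one_div_cancel hb.ne'] at this
  nlinarith [maxDanger_le_totalW hl hσ, b.cast_nonneg (α := ℝ)]

lemma not_forall_M_of_totalW_lt_one (hl : 0 ≤ lam) (hσ : DangerSummable lam E σ)
    (h : totalW lam E σ < 1) {S : Finset V} (hS : S ∈ E) : ¬ ∀ v ∈ S, σ v = Mark.M := by
  intro hM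
  have := hσ.le_tsum (⟨S, hS⟩ : E) fun S' _ => wS_nonneg hl σ S'.1
  rw [wS_eq_one_of_forall_M hM] at this
  exact absurd h (not_lt.2 this)

section MakerClaims

variable (hl0 : 0 < lam)
include hl0

lemma DangerSummable.claimSet_singleton_M (hσ : DangerSummable lam E σ) {x : V}
    (hx : σ x = Mark.U) : DangerSummable lam E (claimSet σ {x} Mark.M) :=
  (hσ.add ((hσ.summable_ite_mem hl0.le x).mul_left _)).congr fun S =>
    (wS_claimSet_singleton_M hl0.ne' hx S.1).symm

lemma totalW_claimSet_singleton_M (hσ : DangerSummable lam E σ) {x : V} (hx : σ x = Mark.U) :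
    totalW lam E (claimSet σ {x} Mark.M)
      = totalW lam E σ + (lam⁻¹ - 1) * vertexDanger lam E σ x := by
  unfold totalW vertexDanger
  rw [tsum_congr fun S : E => wS_claimSet_singleton_M hl0.ne' hx S.1,
    hσ.tsum_add ((hσ.summable_ite_mem hl0.le x).mul_left _), tsum_mul_left]

variable (hl1 : lam ≤ 1)
include hl1

lemma vertexDanger_claimSet_singleton_M_le (hσ : DangerSummable lam E σ) {x : V}
    (hx : σ x = Mark.U) (v : V) :
    vertexDanger lam E (claimSet σ {x} Mark.M) v ≤ lam⁻¹ * vertexDanger lam E σ v := by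
  have hinv : 0 ≤ lam⁻¹ - 1 := sub_nonneg.2 ((one_le_inv₀ hl0).2 hl1)
  unfold vertexDanger
  rw [← tsum_mul_left]
  refine ((hσ.claimSet_singleton_M hl0 hx).summable_ite_mem hl0.le v).tsum_le_tsum (fun S => ?_)
    ((hσ.summable_ite_mem hl0.le v).mul_left _)
  split_ifs
  · rw [wS_claimSet_singleton_M hl0.ne' hx]
    nlinarith [ite_mem_wS_le hl0.le σ x S.1]
  · simp

lemma maxDanger_claimSet_singleton_M_le (hσ : DangerSummable lam E σ) {x : V}
    (hx : σ x = Mark.U) :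
    maxDanger lam E (claimSet σ {x} Mark.M) ≤ lam⁻¹ * maxDanger lam E σ := by
  refine Real.sSup_le ?_ (mul_nonneg (inv_nonneg.2 hl0.le) (maxDanger_nonneg hl0.le E σ))
  rintro _ ⟨v, hv, rfl⟩
  have hvU := ((claimSet_eq_U_iff (by decide)).1 hv).2
  exact (vertexDanger_claimSet_singleton_M_le hl0 hl1 hσ hx v).trans
    (mul_le_mul_of_nonneg_left (vertexDanger_le_maxDanger hl0.le hσ hvU) (by positivity))

end MakerClaims

lemma DangerSummable.claimSet_M (hl0 : 0 < lam) {A : Finset V} :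
    ∀ {σ : V → Mark}, DangerSummable lam E σ → ↑A ⊆ {v | σ v = Mark.U} →
      DangerSummable lam E (claimSet σ A Mark.M) := by
  induction A using Finset.induction_on with
  | empty => intro σ hσ _; rwa [claimSet_empty]
  | insert x A hxA ih =>
    intro σ hσ hA
    rw [claimSet_insert]
    exact ih (hσ.claimSet_singleton_M hl0 (hA (Finset.mem_insert_self x A)))
      (subset_unclaimed_claimSet_singleton (by decide) hA hxA)

lemma totalW_claimSet_M_le (hl0 : 0 < lam) (hl1 : lam ≤ 1) {A : Finset V} :
    ∀ {σ : V → Mark}, DangerSummable lam E σ → ↑A ⊆ {v | σ v = Mark.U} →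
      totalW lam E (claimSet σ A Mark.M)
        ≤ totalW lam E σ + (lam⁻¹ ^ A.card - 1) * maxDanger lam E σ := by
  have hinv : 1 ≤ lam⁻¹ := (one_le_inv₀ hl0).2 hl1
  induction A using Finset.induction_on with
  | empty => intro σ _ _; simp [claimSet_empty]
  | insert x A hxA ih =>
    intro σ hσ hA
    have hx : σ x = Mark.U := hA (Finset.mem_insert_self x A)
    rw [claimSet_insert, Finset.card_insert_of_notMem hxA]
    have hrest := ih (hσ.claimSet_singleton_M hl0 hx)
      (subset_unclaimed_claimSet_singleton (by decide) hA hxA)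
    have hfirst := totalW_claimSet_singleton_M hl0 hσ hx
    have hmax := maxDanger_claimSet_singleton_M_le hl0 hl1 hσ hx
    have hxmax := vertexDanger_le_maxDanger hl0.le hσ hx
    have hpow : 0 ≤ lam⁻¹ ^ A.card - 1 := sub_nonneg.2 (one_le_pow₀ hinv)
    calc _ ≤ totalW lam E (claimSet σ {x} Mark.M)
            + (lam⁻¹ ^ A.card - 1) * maxDanger lam E (claimSet σ {x} Mark.M) := hrest
      _ ≤ totalW lam E σ + (lam⁻¹ - 1) * maxDanger lam E σ
            + (lam⁻¹ ^ A.card - 1) * (lam⁻¹ * maxDanger lam E σ) := by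
          rw [hfirst]
          gcongr
      _ = _ := by ring

lemma BreakerSafe.claimSet_M (hl0 : 0 < lam) (hl1 : lam ≤ 1) {b : ℕ}
    (hσ : BreakerSafe lam E b σ) {A : Finset V} (hA : ↑A ⊆ {v | σ v = Mark.U})
    (hcard : lam⁻¹ ^ A.card ≤ b + 1) :
    DangerSummable lam E (claimSet σ A Mark.M) ∧ totalW lam E (claimSet σ A Mark.M) < 1 := by
  refine ⟨hσ.1.claimSet_M hl0 hA, ?_⟩
  have := mul_le_mul_of_nonneg_right (sub_le_iff_le_add.2 hcard) (maxDanger_nonneg hl0.le E σ)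
  linarith [totalW_claimSet_M_le hl0 hl1 hσ.1 hA, hσ.2]

section BreakerClaims

variable (hl : 0 ≤ lam)
include hl

lemma DangerSummable.claimSet_B (hσ : DangerSummable lam E σ) (A : Finset V) :
    DangerSummable lam E (claimSet σ A Mark.B) :=
  hσ.of_nonneg_of_le (fun S => wS_nonneg hl _ S.1) fun S => wS_claimSet_B_le hl σ A S.1

lemma totalW_claimSet_singleton_B (hσ : DangerSummable lam E σ) (x : V) :
    totalW lam E (claimSet σ {x} Mark.B) = totalW lam E σ - vertexDanger lam E σ x := by
  unfold totalW vertexDanger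
  rw [tsum_congr fun S : E => wS_claimSet_singleton_B x S.1,
    hσ.tsum_sub (hσ.summable_ite_mem hl x)]

lemma vertexDanger_claimSet_B_le (hσ : DangerSummable lam E σ) (A : Finset V) (v : V) :
    vertexDanger lam E (claimSet σ A Mark.B) v ≤ vertexDanger lam E σ v := by
  refine ((hσ.claimSet_B hl A).summable_ite_mem hl v).tsum_le_tsum (fun S => ?_)
    (hσ.summable_ite_mem hl v)
  split_ifs
  exacts [wS_claimSet_B_le hl σ A S.1, le_rfl]

lemma maxDanger_claimSet_B_le (hσ : DangerSummable lam E σ) (A : Finset V) :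
    maxDanger lam E (claimSet σ A Mark.B) ≤ maxDanger lam E σ := by
  refine Real.sSup_le ?_ (maxDanger_nonneg hl E σ)
  rintro _ ⟨v, hv, rfl⟩
  exact (vertexDanger_claimSet_B_le hl hσ A v).trans
    (vertexDanger_le_maxDanger hl hσ ((claimSet_eq_U_iff (by decide)).1 hv).2)

lemma exists_greedy_claimSet_B {ε : ℝ} (hε : 0 < ε) (j : ℕ) :
    ∀ {σ : V → Mark}, DangerSummable lam E σ → ∃ A : Finset V, A.card ≤ j ∧
      ↑A ⊆ {v | σ v = Mark.U} ∧
      totalW lam E (claimSet σ A Mark.B) + j * maxDanger lam E (claimSet σ A Mark.B)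
        ≤ totalW lam E σ + j * ε := by
  induction j with
  | zero => intro σ _; exact ⟨∅, by simp, by simp, by simp [claimSet_empty]⟩
  | succ j ih =>
    intro σ hσ
    by_cases hne : ∃ v, σ v = Mark.U
    swap
    · have hnone : {v | σ v = Mark.U} = ∅ :=
        Set.eq_empty_of_forall_notMem fun v hv => hne ⟨v, hv⟩
      have hmax : maxDanger lam E σ = 0 := by simp [maxDanger, hnone]
      refine ⟨∅, by simp, by simp, ?_⟩
      rw [claimSet_empty, hmax]
      nlinarith
    obtain ⟨v, hv, hvmax⟩ := exists_maxDanger_sub_lt hne hε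
    obtain ⟨A, hcard, hA, hbound⟩ := ih (hσ.claimSet_B hl {v})
    refine ⟨insert v A, (Finset.card_insert_le v A).trans (by omega), ?_, ?_⟩
    · intro u hu
      rcases Finset.mem_insert.1 hu with rfl | hu
      · exact hv
      · exact ((claimSet_eq_U_iff (by decide)).1 (hA hu)).2
    rw [claimSet_insert]
    have hmono := (maxDanger_claimSet_B_le hl (hσ.claimSet_B hl {v}) A).trans
      (maxDanger_claimSet_B_le hl hσ {v})
    rw [totalW_claimSet_singleton_B hl hσ] at hbound
    push_cast
    linarith

lemma exists_breakerSafe_claimSet_B (hσ : DangerSummable lam E σ) (h : totalW lam E σ < 1)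
    (b : ℕ) : ∃ A : Finset V, ↑A ⊆ {v | σ v = Mark.U} ∧ A.card ≤ b ∧
      BreakerSafe lam E b (claimSet σ A Mark.B) := by
  have hb : (0 : ℝ) < b + 1 := by positivity
  obtain ⟨A, hcard, hA, hbound⟩ :=
    exists_greedy_claimSet_B hl (div_pos (sub_pos.2 h) hb) b hσ
  refine ⟨A, hA, hcard, hσ.claimSet_B hl A, hbound.trans_lt ?_⟩
  have : (b : ℝ) * ((1 - totalW lam E σ) / (b + 1)) < 1 - totalW lam E σ := by
    rw [mul_div_assoc', div_lt_iff₀ hb]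
    nlinarith
  linarith

lemma exists_strategy_breakerSafe (E : Set (Finset V)) (b : ℕ) :
    ∃ str : BStrategy V b, ∀ τ : V → Mark,
      DangerSummable lam E τ → totalW lam E τ < 1 →
      BreakerSafe lam E b (claimSet τ (str.move τ) Mark.B) := by
  have : ∀ τ : V → Mark, ∃ A : Finset V, ↑A ⊆ {v | τ v = Mark.U} ∧ A.card ≤ b ∧
      (DangerSummable lam E τ → totalW lam E τ < 1 →
        BreakerSafe lam E b (claimSet τ A Mark.B)) := by
    intro τ
    by_cases h : DangerSummable lam E τ ∧ totalW lam E τ < 1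
    · obtain ⟨A, hA, hcard, hsafe⟩ := exists_breakerSafe_claimSet_B hl h.1 h.2 b
      exact ⟨A, hA, hcard, fun _ _ => hsafe⟩
    · exact ⟨∅, by simp, by simp, fun h₁ h₂ => absurd ⟨h₁, h₂⟩ h⟩
  choose move sub card_le safe using this
  exact ⟨⟨move, sub, card_le⟩, safe⟩

end BreakerClaims

lemma inv_rpow_neg_one_div_pow_le {x : ℝ} (hx : 1 ≤ x) (n : ℕ) :
    (x ^ (-(1 : ℝ) / n))⁻¹ ^ n ≤ x := by
  rcases n.eq_zero_or_pos with rfl | hn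
  · simpa using hx
  rw [← Real.rpow_neg (by linarith), ← Real.rpow_natCast, ← Real.rpow_mul (by linarith)]
  field_simp
  simp

end Beck

theorem stmt_16_general {V : Type*} (m b : ℕ)
    (E : Set (Finset V)) (σ0 : V → Mark)
    (hsum : Summable fun S : E => wS (((b : ℝ) + 1) ^ (-(1 : ℝ) / m)) σ0 S.1)
    (hdanger : totalW (((b : ℝ) + 1) ^ (-(1 : ℝ) / m)) E σ0 < 1 / ((b : ℝ) + 1)) :
    ∃ str : BStrategy V b, ∀ (σ : ℕ → V → Mark) (A : ℕ → Finset V),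
      IsPlay (fun _ => m) b str σ0 σ A →
      ∀ k : ℕ, ∀ S ∈ E, ¬ ∀ v ∈ S, claimSet (σ k) (A k) Mark.M v = Mark.M := by
  set lam : ℝ := ((b : ℝ) + 1) ^ (-(1 : ℝ) / m)
  have hb1 : (1 : ℝ) ≤ b + 1 := le_add_of_nonneg_left b.cast_nonneg
  have hl0 : 0 < lam := Real.rpow_pos_of_pos (by linarith) _
  have hl1 : lam ≤ 1 := Real.rpow_le_one_of_one_le_of_nonpos hb1
    (div_nonpos_of_nonpos_of_nonneg (by norm_num) m.cast_nonneg)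
  have hcard : ∀ a ≤ m, lam⁻¹ ^ a ≤ b + 1 := fun a ha =>
    (pow_le_pow_right₀ ((one_le_inv₀ hl0).2 hl1) ha).trans
      (Beck.inv_rpow_neg_one_div_pow_le hb1 m)
  obtain ⟨str, hstr⟩ := Beck.exists_strategy_breakerSafe hl0.le E b
  refine ⟨str, fun σ A ⟨h0, hA, hAcard, hstep⟩ => ?_⟩
  have hmaker : ∀ k, Beck.BreakerSafe lam E b (σ k) →
      Beck.DangerSummable lam E (claimSet (σ k) (A k) Mark.M) ∧
        totalW lam E (claimSet (σ k) (A k) Mark.M) < 1 := fun k hk =>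
    hk.claimSet_M hl0 hl1 (hA k) (hcard _ (hAcard k))
  have hsafe : ∀ k, Beck.BreakerSafe lam E b (σ k) := by
    intro k
    induction k with
    | zero => exact h0 ▸ Beck.BreakerSafe.of_totalW_lt hl0.le hsum hdanger
    | succ k ih => exact (hstep k) ▸ hstr _ (hmaker k ih).1 (hmaker k ih).2
  intro k S hS
  obtain ⟨hsummable, hlt⟩ := hmaker k (hsafe k)
  exact Beck.not_forall_M_of_totalW_lt_one hl0.le hsummable hlt hS

/-- Beck's criterion for infinite hypergraphs: if the total danger of the initial
configuration `σ0` at `λ = (b+1)^{−1/m}` is less than `1/(b+1)`, then Breaker has a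
strategy for the `(m,b)` Maker-Breaker game on the hypergraph with (finite) hyperedges
`E` starting from `σ0` which guarantees that Maker never fully claims a hyperedge. -/
theorem stmt_16 {V : Type*} (m b : ℕ) (hm : 1 ≤ m) (hb : 1 ≤ b)
    (E : Set (Finset V)) (σ0 : V → Mark)
    (hsum : Summable fun S : E => wS (((b : ℝ) + 1) ^ (-(1 : ℝ) / m)) σ0 S.1)
    (hdanger : totalW (((b : ℝ) + 1) ^ (-(1 : ℝ) / m)) E σ0 < 1 / ((b : ℝ) + 1)) :
    ∃ str : BStrategy V b, ∀ (σ : ℕ → V → Mark) (A : ℕ → Finset V),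
      IsPlay (fun _ => m) b str σ0 σ A →
      ∀ k : ℕ, ∀ S ∈ E, ¬ ∀ v ∈ S, claimSet (σ k) (A k) Mark.M v = Mark.M :=
  stmt_16_general m b E σ0 hsum hdanger
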